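/- arXiv:2112.14970 — 2 statements merged into one kernel-verified Lean document; each statement's English description precedes it below -/
import Mathlib

section
/- Let A = ⊕_{i=0}^n A_i be a finite-dimensional graded commutative algebra over a field K of characteristic 0 such that A is generated as an algebra by its degree-one part A_1, A_0 ≅ K, A_n ≅ K, and for each i the multiplication pairing A_i × A_{n-i} → A_n is non-degenerate. Fix a basis v_1,…,v_r of A_1 and define f(x_1,…,x_r) = (x_1 v_1 + … + x_r v_r)^n ∈ A_n ≅ K. Then A is isomorphic as a graded K-algebra to K[t_1,…,t_r] / { p ∈ K[t_1,…,t_r] : p(∂/∂x_1,…,∂/∂x_r) f = 0 }. -/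
open MvPolynomial

/-- The constant-coefficient differential operator `p(∂/∂x_1, …, ∂/∂x_r)`
associated to a polynomial `p`. -/
noncomputable def diffOp {K : Type*} [CommRing K] {r : ℕ}
    (p : MvPolynomial (Fin r) K) : Module.End K (MvPolynomial (Fin r) K) :=
  ∑ m ∈ p.support,
    p.coeff m • ((List.ofFn fun i : Fin r => ((pderiv i).toLinearMap ^ m i)).prod)

namespace PKaux

variable {K : Type*} [Field K] {A : Type*} [CommRing A] [Algebra K A] {r : ℕ}

/-- Apply a linear functional to the coefficients of a polynomial. -/
noncomputable def lpsi (ψ : A →ₗ[K] K) (P : MvPolynomial (Fin r) A) : MvPolynomial (Fin r) K :=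
  ∑ m ∈ P.support, monomial m (ψ (P.coeff m))

lemma coeff_lpsi (ψ : A →ₗ[K] K) (P : MvPolynomial (Fin r) A) (m : Fin r →₀ ℕ) :
    (lpsi ψ P).coeff m = ψ (P.coeff m) := by
  classical
  rw [lpsi, coeff_sum]
  simp_rw [coeff_monomial]
  rw [Finset.sum_ite_eq' P.support m (fun m' => ψ (P.coeff m'))]
  split_ifs with h
  · rfl
  · rw [notMem_support_iff.mp h, map_zero]

lemma lpsi_add (ψ : A →ₗ[K] K) (P Q : MvPolynomial (Fin r) A) :
    lpsi ψ (P + Q) = lpsi ψ P + lpsi ψ Q := by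
  ext m; simp [coeff_lpsi]

lemma lpsi_monomial (ψ : A →ₗ[K] K) (m : Fin r →₀ ℕ) (a : A) :
    lpsi ψ (monomial m a) = monomial m (ψ a) := by
  ext m'; classical
  simp only [coeff_lpsi, coeff_monomial]
  split_ifs <;> simp

lemma lpsi_smul (ψ : A →ₗ[K] K) (k : K) (P : MvPolynomial (Fin r) A) :
    lpsi ψ (k • P) = k • lpsi ψ P := by
  ext m; simp [coeff_lpsi, coeff_smul]

lemma lpsi_nsmul (ψ : A →ₗ[K] K) (k : ℕ) (P : MvPolynomial (Fin r) A) :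
    lpsi ψ (k • P) = k • lpsi ψ P := by
  ext m
  rw [coeff_lpsi, coeff_smul, coeff_smul, coeff_lpsi, map_nsmul]

lemma lpsi_zero (ψ : A →ₗ[K] K) : lpsi (r := r) ψ 0 = 0 := by
  ext m; simp [coeff_lpsi]

lemma pderiv_lpsi (ψ : A →ₗ[K] K) (i : Fin r) (P : MvPolynomial (Fin r) A) :
    pderiv i (lpsi ψ P) = lpsi ψ (pderiv i P) := by
  induction P using MvPolynomial.induction_on' with
  | monomial m a =>
      rw [lpsi_monomial, pderiv_monomial, pderiv_monomial, lpsi_monomial]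
      congr 1
      rw [mul_comm ((ψ : A →ₗ[K] K) a), ← nsmul_eq_mul, ← map_nsmul, nsmul_eq_mul, mul_comm]
  | add p q hp hq => rw [lpsi_add, map_add, map_add, hp, hq, lpsi_add]

lemma eval_lpsi (ψ : A →ₗ[K] K) (x : Fin r → K) (P : MvPolynomial (Fin r) A) :
    eval x (lpsi ψ P) = ψ (eval (fun j => algebraMap K A (x j)) P) := by
  induction P using MvPolynomial.induction_on' with
  | monomial m a =>
      rw [lpsi_monomial, eval_monomial, eval_monomial]
      rw [show (m.prod fun i k => algebraMap K A (x i) ^ k)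
          = algebraMap K A (m.prod fun i k => (x i) ^ k) by
        rw [Finsupp.prod, Finsupp.prod, map_prod]; simp_rw [map_pow]]
      rw [mul_comm a, ← Algebra.smul_def, map_smul, smul_eq_mul, mul_comm]
  | add p q hp hq => rw [lpsi_add, map_add, map_add, map_add, hp, hq]


section Llemmas

variable (vv : Fin r → A)

/-- The generic linear form. -/
noncomputable def LL : MvPolynomial (Fin r) A := ∑ j, C (vv j) * X j

lemma pderiv_LL (i : Fin r) : pderiv i (LL vv) = C (vv i) := by
  classical
  rw [LL, map_sum]
  rw [Finset.sum_eq_single i]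
  · rw [pderiv_C_mul, pderiv_X_self, mul_one]
  · intro j _ hj
    rw [pderiv_C_mul, pderiv_X_of_ne hj, mul_zero]
  · simp

lemma pderiv_C_mul_LL_pow (i : Fin r) (a : A) (m : ℕ) :
    pderiv i (C a * LL vv ^ m) = m • (C (a * vv i) * LL vv ^ (m - 1)) := by
  rw [pderiv_C_mul, Derivation.leibniz_pow, pderiv_LL]
  rw [smul_eq_mul, mul_smul_comm, C_mul]
  ring_nf

lemma listD (l : List (Fin r)) (a : A) (m : ℕ) :
    ((l.map fun i => ((pderiv i).toLinearMap : Module.End A (MvPolynomial (Fin r) A))).prod)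
        (C a * LL vv ^ m)
      = m.descFactorial l.length • (C (a * (l.map vv).prod) * LL vv ^ (m - l.length)) := by
  induction l with
  | nil => simp
  | cons i t ih =>
      rw [List.map_cons, List.prod_cons, Module.End.mul_apply, ih, map_nsmul]
      rw [show ((pderiv i).toLinearMap : Module.End A (MvPolynomial (Fin r) A))
            (C (a * (t.map vv).prod) * LL vv ^ (m - t.length))
          = pderiv i (C (a * (t.map vv).prod) * LL vv ^ (m - t.length)) from rfl]
      rw [pderiv_C_mul_LL_pow, smul_smul, List.length_cons, List.map_cons, List.prod_cons]
      rw [Nat.descFactorial_succ, Nat.sub_sub]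
      ring_nf

end Llemmas

section Bridge

lemma list_ofFn_pow_eq {M : Type*} [Monoid M] (g : Fin r → M) (β : Fin r → ℕ) :
    ((((List.finRange r).flatMap fun i => List.replicate (β i) i)).map g).prod
      = (List.ofFn fun i => g i ^ β i).prod := by
  rw [List.map_flatMap]
  simp [List.flatMap, List.prod_flatten, List.map_map, Function.comp_def, List.ofFn_eq_map,
    List.prod_replicate]

lemma flatList_length (β : Fin r → ℕ) :
    (((List.finRange r).flatMap fun i => List.replicate (β i) i)).length = ∑ i, β i := by
  rw [List.length_flatMap]
  simp [Function.comp_def, ← List.ofFn_eq_map, List.sum_ofFn]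

end Bridge

section Graded

variable (𝒜 : ℕ → Submodule K A) [GradedAlgebra 𝒜] (vv : Fin r → A)

lemma list_prod_mem (hv : ∀ i, vv i ∈ 𝒜 1) (l : List (Fin r)) : (l.map vv).prod ∈ 𝒜 l.length := by
  induction l with
  | nil => simpa using SetLike.one_mem_graded 𝒜
  | cons i t ih =>
      rw [List.map_cons, List.prod_cons, List.length_cons]
      have := SetLike.mul_mem_graded (hv i) ih
      rwa [add_comm] at this

lemma aeval_isHomogeneous_mem (hv : ∀ i, vv i ∈ 𝒜 1) {q : MvPolynomial (Fin r) K} {d : ℕ}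
    (hq : q.IsHomogeneous d) : aeval vv q ∈ 𝒜 d := by
  classical
  rw [q.as_sum, map_sum]
  apply Submodule.sum_mem
  intro β hβ
  rw [aeval_monomial]
  have hdeg : ∑ i ∈ β.support, β i • (1 : ℕ) = d := by
    have := hq (mem_support_iff.mp hβ)
    rw [← this, Finsupp.weight_apply, Finsupp.sum]
    simp
  have hmem : (∏ i ∈ β.support, vv i ^ β i) ∈ 𝒜 d := by
    rw [← hdeg]
    exact SetLike.prod_pow_mem_graded 𝒜 _ _ _ (fun i _ => hv i)
  rw [← Algebra.smul_def]
  exact Submodule.smul_mem _ _ hmem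

end Graded

section DiffOp

lemma diffOp_monomial (β : Fin r →₀ ℕ) (c : K) :
    diffOp (monomial β c)
      = c • ((List.ofFn fun i : Fin r => ((pderiv i).toLinearMap ^ β i)).prod) := by
  classical
  by_cases hc : c = 0
  · subst hc; simp [diffOp]
  · rw [diffOp, support_monomial, if_neg hc, Finset.sum_singleton, coeff_monomial, if_pos rfl]

lemma diffOp_add (p q : MvPolynomial (Fin r) K) :
    diffOp (p + q) = diffOp p + diffOp q := by
  classical
  have key : ∀ (p' : MvPolynomial (Fin r) K) (s : Finset (Fin r →₀ ℕ)), p'.support ⊆ s →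
      diffOp p' = ∑ m ∈ s,
        p'.coeff m • ((List.ofFn fun i : Fin r => ((pderiv i).toLinearMap ^ m i)).prod) :=
    fun p' s h => Finset.sum_subset h (fun m _ hm => by rw [notMem_support_iff.mp hm, zero_smul])
  rw [key (p + q) _ support_add, key p _ Finset.subset_union_left,
    key q _ Finset.subset_union_right, ← Finset.sum_add_distrib]
  refine Finset.sum_congr rfl fun m _ => ?_
  rw [coeff_add, add_smul]

lemma diffOp_zero : diffOp (0 : MvPolynomial (Fin r) K) = 0 := by
  rw [diffOp, support_zero, Finset.sum_empty]

lemma diffOp_sum {X : Type*} (s : Finset X) (g : X → MvPolynomial (Fin r) K) :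
    diffOp (∑ x ∈ s, g x) = ∑ x ∈ s, diffOp (g x) := by
  classical
  induction s using Finset.induction_on with
  | empty => simpa using diffOp_zero
  | @insert x s hx ih => rw [Finset.sum_insert hx, Finset.sum_insert hx, diffOp_add, ih]

lemma lpsi_list_prod (ψ : A →ₗ[K] K) (l : List (Fin r)) (P : MvPolynomial (Fin r) A) :
    ((l.map fun i => ((pderiv i).toLinearMap : Module.End K (MvPolynomial (Fin r) K))).prod)
        (lpsi ψ P)
      = lpsi ψ
        (((l.map fun i => ((pderiv i).toLinearMap : Module.End A (MvPolynomial (Fin r) A))).prod)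
          P) := by
  induction l generalizing P with
  | nil => rfl
  | cons i t ih =>
      rw [List.map_cons, List.prod_cons, List.map_cons, List.prod_cons,
        Module.End.mul_apply, Module.End.mul_apply, ih]
      exact pderiv_lpsi ψ i _

lemma smul_C' (k : K) (a : A) : (k • C a : MvPolynomial (Fin r) A) = C (k • a) := by
  ext m
  rw [coeff_smul]
  classical
  simp only [coeff_C]
  split_ifs <;> simp

/-- The key formula: applying the differential operator of a monomial to `lpsi ψ (LL vv ^ n)`. -/
lemma diffOp_monomial_lpsi (ψ : A →ₗ[K] K) (vv : Fin r → A) (n : ℕ) (β : Fin r →₀ ℕ) (c : K) :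
    diffOp (monomial β c) (lpsi ψ (LL vv ^ n))
      = c • ((n.descFactorial (∑ i, β i)) •
          lpsi ψ (C (∏ i, vv i ^ β i) * LL vv ^ (n - ∑ i, β i))) := by
  rw [diffOp_monomial, LinearMap.smul_apply]
  congr 1
  have hK := list_ofFn_pow_eq (r := r)
    (fun i => ((pderiv i).toLinearMap : Module.End K (MvPolynomial (Fin r) K))) (fun i => β i)
  have hA := list_ofFn_pow_eq (r := r) (vv) (fun i => β i)
  rw [← hK, lpsi_list_prod]
  have hA' := list_ofFn_pow_eq (r := r)
    (fun i => ((pderiv i).toLinearMap : Module.End A (MvPolynomial (Fin r) A))) (fun i => β i)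
  have h1 : (LL vv ^ n : MvPolynomial (Fin r) A) = C (1 : A) * LL vv ^ n := by rw [map_one, one_mul]
  rw [h1, listD, flatList_length, one_mul, hA, List.prod_ofFn, lpsi_nsmul]

lemma aeval_eq_sum (vv : Fin r → A) (q : MvPolynomial (Fin r) K) :
    aeval vv q = ∑ β ∈ q.support, (q.coeff β) • ∏ i, vv i ^ β i := by
  conv_lhs => rw [q.as_sum]
  rw [map_sum]
  refine Finset.sum_congr rfl fun β _ => ?_
  rw [aeval_monomial, ← Algebra.smul_def, Finsupp.prod_pow]

lemma lpsi_finset_sum (ψ : A →ₗ[K] K) {X : Type*} (s : Finset X)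
    (g : X → MvPolynomial (Fin r) A) :
    lpsi ψ (∑ x ∈ s, g x) = ∑ x ∈ s, lpsi ψ (g x) := by
  classical
  induction s using Finset.induction_on with
  | empty => simpa using lpsi_zero ψ
  | @insert x s hx ih => rw [Finset.sum_insert hx, Finset.sum_insert hx, lpsi_add, ih]

/-- The key formula for homogeneous polynomials. -/
lemma diffOp_isHomogeneous_lpsi (ψ : A →ₗ[K] K) (vv : Fin r → A) (n : ℕ) {d : ℕ}
    {q : MvPolynomial (Fin r) K} (hq : q.IsHomogeneous d) :
    diffOp q (lpsi ψ (LL vv ^ n))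
      = (n.descFactorial d) • lpsi ψ (C (aeval vv q) * LL vv ^ (n - d)) := by
  have hdeg : ∀ β ∈ q.support, (∑ i, β i) = d := by
    intro β hβ
    have h1 := hq (mem_support_iff.mp hβ)
    rw [← h1, Finsupp.weight_apply, Finsupp.sum]
    rw [Finset.sum_subset (Finset.subset_univ β.support)]
    · simp
    · intro i _ hi
      rw [Finsupp.notMem_support_iff.mp hi]; simp
  conv_lhs => rw [q.as_sum]
  rw [diffOp_sum, LinearMap.sum_apply]
  rw [aeval_eq_sum, map_sum, Finset.sum_mul, lpsi_finset_sum, Finset.smul_sum]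
  refine Finset.sum_congr rfl fun β hβ => ?_
  rw [diffOp_monomial_lpsi, hdeg β hβ, smul_comm, ← smul_C', smul_mul_assoc, lpsi_smul]

lemma LL_eval_zero (vv : Fin r → A) :
    eval (fun j => algebraMap K A ((fun _ => (0 : K)) j)) (LL vv) = 0 := by
  rw [LL, map_sum]
  refine Finset.sum_eq_zero fun j _ => ?_
  rw [eval_mul, eval_C, eval_X]
  simp

lemma eval_zero_diff (ψ : A →ₗ[K] K) (vv : Fin r → A) (γ : Fin r →₀ ℕ) (b : A) (e : ℕ) :
    eval (fun _ => (0 : K))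
      (((((List.finRange r).flatMap fun i => List.replicate (γ i) i)).map
          fun i => ((pderiv i).toLinearMap : Module.End K (MvPolynomial (Fin r) K))).prod
        (lpsi ψ (C b * LL vv ^ e)))
      = (e.descFactorial (∑ i, γ i)) • ψ ((b * ∏ i, vv i ^ γ i) * (0 : A) ^ (e - ∑ i, γ i)) := by
  rw [lpsi_list_prod, listD, flatList_length]
  rw [show (((((List.finRange r).flatMap fun i => List.replicate (γ i) i)).map vv).prod)
      = ∏ i, vv i ^ γ i by rw [list_ofFn_pow_eq (r := r) vv (fun i => γ i), List.prod_ofFn]]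
  rw [lpsi_nsmul, map_nsmul, eval_lpsi, map_mul, map_pow, eval_C, LL_eval_zero]

end DiffOp

end PKaux

open PKaux

/-- Pukhlikov–Khovanskii description of a finite-dimensional graded commutative
algebra with Poincaré duality, generated in degree one, as the quotient of a
polynomial ring by the annihilator of the volume polynomial
`f(x) = (x₁v₁ + … + x_r v_r)^n`. -/
theorem stmt0 {K : Type*} [Field K] [CharZero K]
    {A : Type*} [CommRing A] [Algebra K A] [FiniteDimensional K A]
    (n : ℕ) (𝒜 : ℕ → Submodule K A) [GradedAlgebra 𝒜]
    (htop : ∀ m : ℕ, n < m → 𝒜 m = ⊥)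
    (h0 : Module.finrank K (𝒜 0) = 1)
    (hn : Module.finrank K (𝒜 n) = 1)
    (hgen : Algebra.adjoin K ((𝒜 1 : Submodule K A) : Set A) = ⊤)
    (hpd : ∀ i : ℕ, i ≤ n → ∀ a ∈ 𝒜 i, a ≠ 0 → ∃ b ∈ 𝒜 (n - i), a * b ≠ 0)
    (r : ℕ) (v : Module.Basis (Fin r) K (𝒜 1))
    (φ : (𝒜 n) ≃ₗ[K] K)
    (hmem : ∀ x : Fin r → K, (∑ j, x j • ((v j : 𝒜 1) : A)) ^ n ∈ 𝒜 n)
    (f : MvPolynomial (Fin r) K)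
    (hf : ∀ x : Fin r → K,
      MvPolynomial.eval x f = φ ⟨(∑ j, x j • ((v j : 𝒜 1) : A)) ^ n, hmem x⟩) :
    Nonempty (A ≃ₐ[K]
      (MvPolynomial (Fin r) K ⧸ Ideal.span {p : MvPolynomial (Fin r) K | diffOp p f = 0})) := by
  classical
  set vv : Fin r → A := fun j => ((v j : 𝒜 1) : A) with hvv
  have hv : ∀ i, vv i ∈ 𝒜 1 := fun i => (v i).2
  -- the linear functional ψ
  obtain ⟨ψ, hψ_same, hψ_ne⟩ : ∃ ψ : A →ₗ[K] K,
      (∀ (a : A) (ha : a ∈ 𝒜 n), ψ a = φ ⟨a, ha⟩) ∧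
        (∀ (a : A) (m : ℕ), a ∈ 𝒜 m → m ≠ n → ψ a = 0) := by
    refine ⟨{ toFun := fun a => φ (DirectSum.decompose 𝒜 a n)
              map_add' := by
                intro a b
                dsimp only
                rw [DirectSum.decompose_add, DirectSum.add_apply, map_add]
              map_smul' := by
                intro k a
                dsimp only
                rw [DirectSum.decompose_smul, DirectSum.smul_apply, map_smul]
                rfl }, ?_, ?_⟩
    · intro a ha
      show φ (DirectSum.decompose 𝒜 a n) = φ ⟨a, ha⟩
      congr 1
      exact Subtype.ext (DirectSum.decompose_of_mem_same 𝒜 ha)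
    · intro a m ha hmn
      show φ (DirectSum.decompose 𝒜 a n) = 0
      have h2 : ((DirectSum.decompose 𝒜 a n : 𝒜 n) : A) = 0 :=
        DirectSum.decompose_of_mem_ne 𝒜 ha hmn
      rw [show (DirectSum.decompose 𝒜 a n : 𝒜 n) = 0 from Subtype.ext h2, map_zero]
  -- f is the explicit polynomial
  have heval_LL : ∀ x : Fin r → K,
      eval (fun j => algebraMap K A (x j)) (LL vv) = ∑ j, x j • vv j := by
    intro x
    rw [LL, map_sum]
    refine Finset.sum_congr rfl fun j _ => ?_
    rw [eval_mul, eval_C, eval_X, mul_comm, ← Algebra.smul_def]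
  have hfeq : f = lpsi ψ (LL vv ^ n) := by
    apply MvPolynomial.funext
    intro x
    rw [hf x, eval_lpsi, map_pow, heval_LL]
    exact (hψ_same _ (hmem x)).symm
  -- the projection π = aeval vv and its surjectivity
  have hadj : Algebra.adjoin K (Set.range vv) = ⊤ := by
    rw [eq_top_iff, ← hgen]
    apply Algebra.adjoin_le
    intro a ha
    have hsum : (∑ j, v.repr ⟨a, ha⟩ j • v j : 𝒜 1) = ⟨a, ha⟩ := v.sum_repr ⟨a, ha⟩
    have heq : a = ∑ j, v.repr ⟨a, ha⟩ j • vv j := by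
      have h2 : ((⟨a, ha⟩ : 𝒜 1) : A) = ∑ j, v.repr ⟨a, ha⟩ j • vv j := by
        conv_lhs => rw [← hsum]
        push_cast
        rfl
      exact h2
    rw [heq]
    exact Subalgebra.sum_mem _ fun j _ => Subalgebra.smul_mem _
      (Algebra.subset_adjoin (Set.mem_range_self j)) _
  have hsurj : Function.Surjective (aeval (R := K) vv) := by
    rw [← AlgHom.range_eq_top, ← Algebra.adjoin_range_eq_range_aeval, hadj]
  -- main kernel identity
  have central : ∀ p : MvPolynomial (Fin r) K,
      diffOp p f = ∑ d ∈ Finset.range (p.totalDegree + 1),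
        (n.descFactorial d) •
          lpsi ψ (C (aeval vv (homogeneousComponent d p)) * LL vv ^ (n - d)) := by
    intro p
    conv_lhs => rw [← p.sum_homogeneousComponent, diffOp_sum, LinearMap.sum_apply]
    refine Finset.sum_congr rfl fun d _ => ?_
    rw [hfeq]
    exact diffOp_isHomogeneous_lpsi ψ vv n (homogeneousComponent_isHomogeneous d p)
  have hcompmem : ∀ (p : MvPolynomial (Fin r) K) (d : ℕ),
      aeval vv (homogeneousComponent d p) ∈ 𝒜 d :=
    fun p d => aeval_isHomogeneous_mem 𝒜 vv hv (homogeneousComponent_isHomogeneous d p)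
  -- direction 1 : ker π ⊆ Ann f
  have dir1 : ∀ p : MvPolynomial (Fin r) K, aeval vv p = 0 → diffOp p f = 0 := by
    intro p hp
    have hcomp : ∀ d : ℕ, aeval vv (homogeneousComponent d p) = 0 := by
      intro d₀
      by_cases hd₀ : d₀ < p.totalDegree + 1
      · have hsum : (∑ d ∈ Finset.range (p.totalDegree + 1),
            aeval vv (homogeneousComponent d p)) = 0 := by
          rw [← map_sum, p.sum_homogeneousComponent, hp]
        have hdec := congrArg
          ((𝒜 d₀).subtype ∘ₗ (DirectSum.component K ℕ (fun i => (𝒜 i : Submodule K A)) d₀) ∘ₗ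
            (DirectSum.decomposeLinearEquiv 𝒜).toLinearMap) hsum
        rw [map_sum, map_zero] at hdec
        have hre : ∀ z : A,
            ((𝒜 d₀).subtype ∘ₗ (DirectSum.component K ℕ (fun i => (𝒜 i : Submodule K A)) d₀) ∘ₗ
              (DirectSum.decomposeLinearEquiv 𝒜).toLinearMap) z
            = ((DirectSum.decompose 𝒜 z d₀ : 𝒜 d₀) : A) := fun z => rfl
        simp only [hre] at hdec
        rw [Finset.sum_eq_single d₀
            (fun d _ hd => DirectSum.decompose_of_mem_ne 𝒜 (hcompmem p d) hd)
          (fun h => absurd (Finset.mem_range.mpr hd₀) h)] at hdec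
        rw [DirectSum.decompose_of_mem_same 𝒜 (hcompmem p d₀)] at hdec
        simpa using hdec
      · rw [homogeneousComponent_eq_zero _ _ (by omega), map_zero]
    rw [central p]
    refine Finset.sum_eq_zero fun d _ => ?_
    rw [hcomp d, map_zero, zero_mul, lpsi_zero, smul_zero]
  -- direction 2 : Ann f ⊆ ker π
  have dir2 : ∀ p : MvPolynomial (Fin r) K, diffOp p f = 0 → aeval vv p = 0 := by
    intro p hp
    rw [central p] at hp
    -- show each homogeneous component maps to zero
    have hcomp : ∀ d₀ ∈ Finset.range (p.totalDegree + 1),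
        aeval vv (homogeneousComponent d₀ p) = 0 := by
      intro d₀ hd₀
      set a : A := aeval vv (homogeneousComponent d₀ p) with ha
      by_cases hd₀n : d₀ ≤ n
      swap
      · have : a ∈ (⊥ : Submodule K A) := by rw [← htop d₀ (by omega)]; exact hcompmem p d₀
        simpa using this
      -- key vanishing for all monomials in the vᵢ
      have hkey : ∀ γ : Fin r →₀ ℕ, ψ (a * ∏ i, vv i ^ γ i) = 0 := by
        intro γ
        by_cases hγ : (∑ i, γ i) = n - d₀
        · -- extract from the differentiated, evaluated identity
          have h2 := congrArg (fun q : MvPolynomial (Fin r) K =>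
            eval (fun _ => (0 : K))
              (((((List.finRange r).flatMap fun i => List.replicate (γ i) i)).map
                fun i => ((pderiv i).toLinearMap :
                  Module.End K (MvPolynomial (Fin r) K))).prod q)) hp
          simp only [map_zero, map_sum] at h2
          rw [Finset.sum_congr rfl (fun d _ => by
            rw [map_nsmul, map_nsmul, eval_zero_diff] :
            ∀ d ∈ Finset.range (p.totalDegree + 1),
              eval (fun _ => (0 : K))
                (((((List.finRange r).flatMap fun i => List.replicate (γ i) i)).map
                  fun i => ((pderiv i).toLinearMap :
                    Module.End K (MvPolynomial (Fin r) K))).prod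
                  ((n.descFactorial d) • lpsi ψ
                    (C (aeval vv (homogeneousComponent d p)) * LL vv ^ (n - d))))
              = (n.descFactorial d) • (((n - d).descFactorial (∑ i, γ i)) •
                  ψ ((aeval vv (homogeneousComponent d p) * ∏ i, vv i ^ γ i)
                    * (0 : A) ^ ((n - d) - ∑ i, γ i))))] at h2
          rw [Finset.sum_eq_single d₀ (fun d _ hdne => by
            rcases lt_trichotomy d d₀ with hlt | heqd | hgt
            · have hne0 : ((n - d) - ∑ i, γ i) ≠ 0 := by omega
              rw [zero_pow hne0, mul_zero, map_zero, smul_zero, smul_zero]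
            · exact absurd heqd hdne
            · by_cases hdn : d ≤ n
              · have hz : (n - d).descFactorial (∑ i, γ i) = 0 := by
                  rw [Nat.descFactorial_eq_zero_iff_lt]
                  omega
                rw [hz, zero_smul, smul_zero]
              · have hz : n.descFactorial d = 0 := by
                  rw [Nat.descFactorial_eq_zero_iff_lt]
                  omega
                rw [hz, zero_smul])
            (fun h => absurd hd₀ (by simpa using h))] at h2
          rw [hγ, Nat.sub_self, pow_zero, mul_one, smul_smul] at h2
          have hcast : ((n.descFactorial d₀ * (n - d₀).descFactorial (n - d₀) : ℕ) : K) ≠ 0 := by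
            rw [Nat.cast_ne_zero, Nat.mul_ne_zero_iff]
            constructor
            · rw [Ne, Nat.descFactorial_eq_zero_iff_lt]
              omega
            · rw [Ne, Nat.descFactorial_eq_zero_iff_lt]
              omega
          rw [nsmul_eq_mul, mul_eq_zero] at h2
          rcases h2 with h2 | h2
          · exact absurd h2 hcast
          · exact h2
        · have h1 : a * (∏ i, vv i ^ γ i) ∈ 𝒜 (d₀ + ∑ i, γ i) := by
            have hprod : (∏ i, vv i ^ γ i) ∈ 𝒜 (∑ i, γ i) := by
              have h3 := list_ofFn_pow_eq (r := r) vv (fun i => γ i)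
              have h4 := list_prod_mem 𝒜 vv hv
                (((List.finRange r).flatMap fun i => List.replicate (γ i) i))
              rw [h3, List.prod_ofFn, flatList_length] at h4
              exact h4
            exact SetLike.mul_mem_graded (hcompmem p d₀) hprod
          exact hψ_ne _ _ h1 (by omega)
      -- extend to all of A
      have hall : ∀ b : A, ψ (a * b) = 0 := by
        intro b
        have hb : b ∈ Submodule.span K (Submonoid.closure (Set.range vv) : Set A) := by
          rw [← Algebra.adjoin_eq_span, hadj]; trivial
        refine Submodule.span_induction ?_ ?_ ?_ ?_ hb
        · intro u hu
          obtain ⟨γ, rfl⟩ : ∃ γ : Fin r →₀ ℕ, u = ∏ i, vv i ^ γ i := by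
            refine Submonoid.closure_induction ?_ ?_ ?_ hu
            · rintro _ ⟨i, rfl⟩
              exact ⟨Finsupp.single i 1, by
                rw [Finset.prod_eq_single i (fun j _ hj => by
                  rw [Finsupp.single_apply, if_neg (fun h => hj h.symm), pow_zero])
                  (by simp)]
                rw [Finsupp.single_apply, if_pos rfl, pow_one]⟩
            · exact ⟨0, by simp⟩
            · rintro x y - - ⟨γ₁, rfl⟩ ⟨γ₂, rfl⟩
              exact ⟨γ₁ + γ₂, by simp [pow_add, Finset.prod_mul_distrib]⟩
          exact hkey γ
        · rw [mul_zero, map_zero]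
        · intro x y _ _ hx hy
          rw [mul_add, map_add, hx, hy, add_zero]
        · intro k x _ hx
          rw [mul_smul_comm, map_smul, hx, smul_zero]
      -- conclude by Poincaré duality
      by_contra hane
      obtain ⟨b, hb, hab⟩ := hpd d₀ hd₀n a (hcompmem p d₀) hane
      have habmem : a * b ∈ 𝒜 n := by
        have := SetLike.mul_mem_graded (hcompmem p d₀) hb
        rwa [Nat.add_sub_cancel' hd₀n] at this
      have : ψ (a * b) ≠ 0 := by
        rw [hψ_same _ habmem]
        simp only [ne_eq, EmbeddingLike.map_eq_zero_iff]
        exact fun h => hab (by simpa using congrArg Subtype.val h)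
      exact this (hall b)
    conv_lhs => rw [← p.sum_homogeneousComponent, map_sum]
    exact Finset.sum_eq_zero hcomp
  -- assemble
  have hS : {p : MvPolynomial (Fin r) K | diffOp p f = 0}
      = ↑(RingHom.ker (aeval (R := K) vv : MvPolynomial (Fin r) K →ₐ[K] A)) := by
    ext p
    simp only [Set.mem_setOf_eq, SetLike.mem_coe, RingHom.mem_ker]
    exact ⟨dir2 p, dir1 p⟩
  have hspan : Ideal.span {p : MvPolynomial (Fin r) K | diffOp p f = 0}
      = RingHom.ker (aeval (R := K) vv : MvPolynomial (Fin r) K →ₐ[K] A) := by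
    rw [hS, Ideal.span_eq]
  exact ⟨((Ideal.quotientKerAlgEquivOfSurjective hsurj).symm.trans
    (Ideal.quotientEquivAlgOfEq K hspan.symm))⟩
end

section
/- Let B be a graded-commutative algebra over a field K with unit in degree 0 and dim_K B^0 = 1, and let ℓ : B → K be an n-homogeneous linear function. Then the quotient algebra A = B / I(L_ℓ), where I(L_ℓ) = { a ∈ B : ℓ(ab) = 0 for all b ∈ B }, is Poincaré n-self-dual: A has a degree-0 unit, A^k = 0 for k > n, dim_K A^n = 1, and the multiplication pairing A^k × A^{n-k} → A^n is non-degenerate for 0 ≤ k ≤ n. -/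
set_option synthInstance.maxHeartbeats 1000000 in
/-- The quotient of a graded-commutative algebra `B` (with `dim B⁰ = 1`) by the
ideal `I(L_ℓ) = {a | ℓ(ab) = 0 ∀ b}` associated to an `n`-homogeneous linear
function `ℓ` is Poincaré `n`-self-dual: it has a degree-0 unit, vanishing
components above degree `n`, one-dimensional top component, and non-degenerate
multiplication pairings `A^m × A^{n-m} → A^n`. Here `Q` together with the
surjection `π` (with kernel `I(L_ℓ)`, respecting the gradings) represents the
quotient algebra `A = B / I(L_ℓ)`. -/
theorem stmt2 {K B Q : Type*} [Field K] [Ring B] [Algebra K B]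
    [Ring Q] [Algebra K Q]
    (𝒜 : ℕ → Submodule K B) [GradedAlgebra 𝒜]
    (hcomm : ∀ i j : ℕ, ∀ a ∈ 𝒜 i, ∀ b ∈ 𝒜 j,
      a * b = ((-1 : K) ^ (i * j)) • (b * a))
    (h0 : Module.finrank K (𝒜 0) = 1)
    (n : ℕ) (ℓ : B →ₗ[K] K) (hne : ℓ ≠ 0)
    (hhom : ∀ m : ℕ, m ≠ n → ∀ b ∈ 𝒜 m, ℓ b = 0)
    (ℬ : ℕ → Submodule K Q) [GradedAlgebra ℬ]
    (π : B →ₐ[K] Q) (hsurj : Function.Surjective π)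
    (hker : ∀ a : B, π a = 0 ↔ ∀ b : B, ℓ (a * b) = 0)
    (hgr : ∀ m : ℕ, Submodule.map π.toLinearMap (𝒜 m) = ℬ m) :
    (1 : Q) ∈ ℬ 0 ∧
    (∀ m : ℕ, n < m → ℬ m = ⊥) ∧
    Module.finrank K (ℬ n) = 1 ∧
    (∀ m : ℕ, m ≤ n → ∀ x ∈ ℬ m, x ≠ 0 → ∃ y ∈ ℬ (n - m), x * y ≠ 0) ∧
    (∀ m : ℕ, m ≤ n → ∀ y ∈ ℬ (n - m), y ≠ 0 → ∃ x ∈ ℬ m, x * y ≠ 0) := by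
  classical
  -- key lemma: for homogeneous `a` of degree `m`, only the `n-m` component of `b`
  -- matters for `ℓ (a * b)`.
  have key : ∀ (m : ℕ) (a : B), a ∈ 𝒜 m → ∀ b : B,
      ℓ (a * b) = ℓ (a * (DirectSum.decompose 𝒜 b (n - m) : B)) := by
    intro m a ha b
    induction b using DirectSum.Decomposition.inductionOn 𝒜 with
    | zero => simp
    | @homogeneous j x =>
      by_cases hj : j = n - m
      · subst hj
        rw [DirectSum.decompose_coe, DirectSum.of_eq_same]
      · rw [DirectSum.decompose_coe, DirectSum.of_eq_of_ne _ _ _ (Ne.symm hj)]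
        simp only [Submodule.coe_zero, mul_zero, map_zero]
        have hmem : a * (x : B) ∈ 𝒜 (m + j) := SetLike.mul_mem_graded ha x.2
        exact hhom (m + j) (by omega) _ hmem
    | add b c hb hc =>
      simp only [mul_add, map_add, DirectSum.decompose_add, DirectSum.add_apply,
        Submodule.coe_add, hb, hc]
  -- B is nontrivial
  obtain ⟨w, hw⟩ : ∃ w : B, ℓ w ≠ 0 := by
    by_contra h
    push_neg at h
    exact hne (LinearMap.ext fun x => h x)
  have hB : (1 : B) ≠ 0 := by
    intro h1
    apply hw
    have : w = 0 := by rw [← one_mul w, h1, zero_mul]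
    rw [this, map_zero]
  -- `𝒜 0` is spanned by `1`
  have h1mem : (1 : B) ∈ 𝒜 0 := SetLike.one_mem_graded 𝒜
  have hA0 : ∀ b ∈ 𝒜 0, ∃ t : K, t • (1 : B) = b := by
    have h1ne : (⟨1, h1mem⟩ : 𝒜 0) ≠ 0 := by
      intro h
      exact hB (by simpa using congrArg Subtype.val h)
    intro b hb
    obtain ⟨t, ht⟩ := (finrank_eq_one_iff_of_nonzero' (⟨1, h1mem⟩ : 𝒜 0) h1ne).mp h0
      ⟨b, hb⟩
    exact ⟨t, congrArg Subtype.val ht⟩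
  -- a homogeneous element of degree m maps to 0 under π iff ℓ kills it against 𝒜 (n-m);
  -- in particular for degree n: π a = 0 iff ℓ a = 0.
  have keyn : ∀ a ∈ 𝒜 n, (π a = 0 ↔ ℓ a = 0) := by
    intro a ha
    constructor
    · intro h
      have := (hker a).mp h 1
      rwa [mul_one] at this
    · intro hla
      rw [hker]
      intro b
      rw [key n a ha b, Nat.sub_self]
      obtain ⟨t, ht⟩ := hA0 _ (DirectSum.decompose 𝒜 b 0).2
      rw [← ht, mul_smul_comm, mul_one, map_smul, hla, smul_zero]
  -- an element of 𝒜 n with ℓ e ≠ 0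
  have hw' := key 0 1 h1mem w
  rw [one_mul, one_mul, Nat.sub_zero] at hw'
  set e : B := (DirectSum.decompose 𝒜 w n : B) with he
  have heA : e ∈ 𝒜 n := (DirectSum.decompose 𝒜 w n).2
  have hle : ℓ e ≠ 0 := by rw [← hw']; exact hw
  have hpe : π e ≠ 0 := fun h => hle ((keyn e heA).mp h)
  refine ⟨?_, ?_, ?_, ?_, ?_⟩
  · rw [← hgr 0]
    exact ⟨1, h1mem, map_one π⟩
  · -- components above n vanish
    intro m hm
    rw [← hgr m, eq_bot_iff]
    rintro x ⟨a, ha, rfl⟩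
    simp only [AlgHom.toLinearMap_apply, Submodule.mem_bot]
    rw [hker]
    intro b
    rw [key m a ha b]
    have hnm0 : n - m = 0 := by omega
    rw [hnm0]
    obtain ⟨t, ht⟩ := hA0 _ (DirectSum.decompose 𝒜 b 0).2
    rw [← ht, mul_smul_comm, mul_one, map_smul, hhom m (by omega) a ha, smul_zero]
  · -- top component is 1-dimensional
    have hspan : ℬ n = Submodule.span K {π e} := by
      apply le_antisymm
      · rw [← hgr n]
        rintro x ⟨a, ha, rfl⟩
        simp only [AlgHom.toLinearMap_apply]
        have : π a = (ℓ a / ℓ e) • π e := by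
          rw [← map_smul, ← sub_eq_zero, ← map_sub]
          have hd : a - (ℓ a / ℓ e) • e ∈ 𝒜 n := sub_mem ha (Submodule.smul_mem _ _ heA)
          rw [keyn _ hd, map_sub, map_smul, smul_eq_mul, div_mul_cancel₀ _ hle, sub_self]
        rw [this]
        exact Submodule.smul_mem _ _ (Submodule.mem_span_singleton_self _)
      · rw [Submodule.span_le, Set.singleton_subset_iff, ← hgr n]
        exact ⟨e, heA, rfl⟩
    rw [hspan]
    exact finrank_span_singleton hpe
  · -- left non-degeneracy
    intro m hmn x hx hx0
    rw [← hgr m] at hx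
    obtain ⟨a, ha, rfl⟩ := hx
    have : ¬ ∀ b : B, ℓ (a * b) = 0 := fun h => hx0 ((hker a).mpr h)
    push_neg at this
    obtain ⟨b, hb⟩ := this
    rw [key m a ha b] at hb
    refine ⟨π (DirectSum.decompose 𝒜 b (n - m) : B), ?_, ?_⟩
    · rw [← hgr (n - m)]
      exact ⟨_, (DirectSum.decompose 𝒜 b (n - m)).2, rfl⟩
    · simp only [AlgHom.toLinearMap_apply] at hx0 ⊢
      rw [← map_mul]
      intro h
      have hmem : a * (DirectSum.decompose 𝒜 b (n - m) : B) ∈ 𝒜 n := by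
        have := SetLike.mul_mem_graded ha (DirectSum.decompose 𝒜 b (n - m)).2
        rwa [Nat.add_sub_cancel' hmn] at this
      exact hb ((keyn _ hmem).mp h)
  · -- right non-degeneracy
    intro m hmn y hy hy0
    rw [← hgr (n - m)] at hy
    obtain ⟨b, hb, rfl⟩ := hy
    have : ¬ ∀ c : B, ℓ (b * c) = 0 := fun h => hy0 ((hker b).mpr h)
    push_neg at this
    obtain ⟨c, hc⟩ := this
    rw [key (n - m) b hb c] at hc
    have hnm : n - (n - m) = m := by omega
    rw [hnm] at hc
    set a : B := (DirectSum.decompose 𝒜 c m : B) with hadef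
    have haA : a ∈ 𝒜 m := (DirectSum.decompose 𝒜 c m).2
    refine ⟨π a, ?_, ?_⟩
    · rw [← hgr m]
      exact ⟨a, haA, rfl⟩
    · simp only [AlgHom.toLinearMap_apply] at hy0 ⊢
      rw [← map_mul]
      intro h
      have hmem : a * b ∈ 𝒜 n := by
        have := SetLike.mul_mem_graded haA hb
        rwa [Nat.add_sub_cancel' hmn] at this
      have h2 : ℓ (a * b) = 0 := (keyn _ hmem).mp h
      rw [hcomm m (n - m) a haA b hb, map_smul, smul_eq_mul] at h2
      have hs : ((-1 : K) ^ (m * (n - m))) ≠ 0 := pow_ne_zero _ (by norm_num)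
      exact hc ((mul_eq_zero.mp h2).resolve_left hs)
end
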